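/- Let f : [a,b] → ℝ be twice differentiable with f' ≥ 0, f'' ≥ 0, and f(t) > 0 for all t ∈ [a,b]. Let g be an increasing, continuous function on [a,b] with g ≥ 0, and let h belong to D₊[a,b] or D₋[a,b] be increasing and nonnegative. If n ∈ ℕ and f(a)^{n+1}·(f'(a))ⁿ·h(a) ≥ n!/(n+1)^{n-1}, then (b-a)·f(a)^{n+1}·g(a)^{n+1}·h(a)/f(b) + (∫_a^b g/f)^{n+1} ≤ ∫_a^b fⁿ·g^{n+1}·h. -/

import Mathlib

/-- `D₊[a,b]`: continuous functions on `[a,b]` having a right-derivative at every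
point of `(a,b)`. -/
def DPlus (a b : ℝ) (h : ℝ → ℝ) : Prop :=
  ContinuousOn h (Set.Icc a b) ∧ ∀ x ∈ Set.Ioo a b, ∃ L : ℝ, HasDerivWithinAt h L (Set.Ioi x) x

/-- `D₋[a,b]`: continuous functions on `[a,b]` having a left-derivative at every
point of `(a,b)`. -/
def DMinus (a b : ℝ) (h : ℝ → ℝ) : Prop :=
  ContinuousOn h (Set.Icc a b) ∧ ∀ x ∈ Set.Ioo a b, ∃ L : ℝ, HasDerivWithinAt h L (Set.Iio x) x

/-!
Put `φ x = ∫ t in a..x, g t / f t`. Integrating over `[a, b]` the pointwise bound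
`(n + 1) φ^n φ' + f(a)^(n+1) g(a)^(n+1) h(a) / f(b) ≤ f^n g^(n+1) h` gives the theorem, because
`(n + 1) φ^n φ'` integrates to `φ(b)^(n+1)`. For the pointwise bound, convexity puts `f` above its
tangent `f(a) u(x)` at `a`, where `u(x) = 1 + f'(a)(x - a)/f(a)`, so `φ(x) ≤ g(x) log u(x) / f'(a)`.
The term `v^n/n!` of the exponential series at `v = (n + 1) log u` gives
`(n + 1) (log u)^n ≤ n!/(n+1)^(n-1) (u^(n+1) - 1)`, and with the hypothesis on
`f(a)^(n+1) f'(a)^n h(a)` this bounds `(n + 1) φ^n φ'` by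
`g^(n+1) h(a) ((f(a) u)^(n+1) - f(a)^(n+1)) / f ≤ g^(n+1) h(a) (f^n - f(a)^(n+1) / f)`.
-/

open Real Set MeasureTheory
open scoped Nat

lemma pow_div_factorial_le_exp_sub_one {x : ℝ} (hx : 0 ≤ x) {n : ℕ} (hn : n ≠ 0) :
    x ^ n / n ! ≤ exp x - 1 := by
  have hsub : ({0, n} : Finset ℕ) ⊆ Finset.range (n + 1) := by
    intro i hi
    rcases Finset.mem_insert.1 hi with rfl | hi
    · simp
    · simp [Finset.mem_singleton.1 hi]
  have := (Finset.sum_le_sum_of_subset_of_nonneg hsub fun i _ _ => by positivity).trans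
    (sum_le_exp_of_nonneg hx (n + 1))
  rw [Finset.sum_pair (Ne.symm hn)] at this
  simp only [pow_zero, Nat.factorial_zero, Nat.cast_one, div_one] at this
  linarith

lemma succ_mul_log_pow_le {n : ℕ} (hn : 1 ≤ n) {u : ℝ} (hu : 1 ≤ u) :
    ((n : ℝ) + 1) * log u ^ n ≤ n ! / ((n : ℝ) + 1) ^ (n - 1) * (u ^ (n + 1) - 1) := by
  have hexp : exp (((n : ℝ) + 1) * log u) = u ^ (n + 1) := by
    rw [← Nat.cast_succ, ← log_pow, exp_log (by positivity)]
  have hpow : ((n : ℝ) + 1) ^ n = ((n : ℝ) + 1) ^ (n - 1) * ((n : ℝ) + 1) := by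
    rw [← pow_succ, Nat.sub_add_cancel hn]
  have key := pow_div_factorial_le_exp_sub_one
    (mul_nonneg (by positivity : (0 : ℝ) ≤ n + 1) (log_nonneg hu)) (by omega : n ≠ 0)
  rw [hexp, mul_pow, hpow, div_le_iff₀ (by positivity)] at key
  rw [div_mul_eq_mul_div, le_div_iff₀ (by positivity)]
  linear_combination key

lemma monotoneOn_Icc_of_derivWithin_nonneg {k : ℝ → ℝ} {a b : ℝ}
    (hk : DifferentiableOn ℝ k (Icc a b)) (h : ∀ x ∈ Icc a b, 0 ≤ derivWithin k (Icc a b) x) :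
    MonotoneOn k (Icc a b) :=
  monotoneOn_of_deriv_nonneg (convex_Icc a b) hk.continuousOn (hk.mono interior_subset)
    fun x hx => by
      rw [← derivWithin_of_mem_nhds (mem_interior_iff_mem_nhds.1 hx)]
      exact h x (interior_subset hx)

lemma add_derivWithin_mul_sub_le {f : ℝ → ℝ} {a b t : ℝ} (hf : DifferentiableOn ℝ f (Icc a b))
    (hf' : MonotoneOn (derivWithin f (Icc a b)) (Icc a b)) (ht : t ∈ Icc a b) :
    f a + derivWithin f (Icc a b) a * (t - a) ≤ f t := by
  have ha : a ∈ Icc a b := left_mem_Icc.2 (ht.1.trans ht.2)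
  have := (convex_Icc a b).mul_sub_le_image_sub_of_le_deriv hf.continuousOn
    (hf.mono interior_subset) (C := derivWithin f (Icc a b) a) (fun x hx => ?_) a ha t ht ht.1
  · linarith
  · rw [← derivWithin_of_mem_nhds (mem_interior_iff_mem_nhds.1 hx)]
    exact hf' ha (interior_subset hx) (interior_subset hx).1

lemma integral_inv_add_mul_sub {a x c d : ℝ} (hc : 0 < c) (hd : 0 < d) (hax : a ≤ x) :
    ∫ t in a..x, (c + d * (t - a))⁻¹ = log ((c + d * (x - a)) / c) / d := by
  have hcx : 0 < c + d * (x - a) := add_pos_of_pos_of_nonneg hc (mul_nonneg hd.le (by linarith))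
  have := intervalIntegral.integral_comp_mul_add (fun y : ℝ => y⁻¹) hd.ne' (c - d * a)
    (a := a) (b := x)
  rw [show d * a + (c - d * a) = c by ring, show d * x + (c - d * a) = c + d * (x - a) by ring,
    integral_inv_of_pos hc hcx, smul_eq_mul] at this
  rw [div_eq_inv_mul, ← this]
  congr 1 with t
  ring_nf

lemma integral_div_le_mul_log {f g : ℝ → ℝ} {a x c d : ℝ} (hc : 0 < c) (hd : 0 < d) (hax : a ≤ x)
    (hf : ContinuousOn f (Icc a x)) (htan : ∀ t ∈ Icc a x, c + d * (t - a) ≤ f t)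
    (hg : ContinuousOn g (Icc a x)) (hg_mono : MonotoneOn g (Icc a x)) (hgx : 0 ≤ g x) :
    ∫ t in a..x, g t / f t ≤ g x * (log ((c + d * (x - a)) / c) / d) := by
  have hpos : ∀ t ∈ Icc a x, 0 < c + d * (t - a) := fun t ht =>
    add_pos_of_pos_of_nonneg hc (mul_nonneg hd.le (sub_nonneg.2 ht.1))
  have hfpos : ∀ t ∈ Icc a x, 0 < f t := fun t ht => (hpos t ht).trans_le (htan t ht)
  rw [← integral_inv_add_mul_sub hc hd hax, ← intervalIntegral.integral_const_mul]
  refine intervalIntegral.integral_mono_on hax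
    ((hg.div hf fun t ht => (hfpos t ht).ne').intervalIntegrable_of_Icc hax)
    ((continuousOn_const.mul (ContinuousOn.inv₀ (by fun_prop) fun t ht => (hpos t ht).ne')
      ).intervalIntegrable_of_Icc hax) fun t ht => ?_
  calc g t / f t ≤ g x / f t :=
        div_le_div_of_nonneg_right (hg_mono ht (right_mem_Icc.2 hax) ht.2) (hfpos t ht).le
    _ ≤ g x / (c + d * (t - a)) := div_le_div_of_nonneg_left hgx (hpos t ht) (htan t ht)
    _ = g x * (c + d * (t - a))⁻¹ := div_eq_mul_inv _ _

lemma continuousOn_primitive_Icc {w : ℝ → ℝ} {a b : ℝ} (hab : a ≤ b)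
    (hw : ContinuousOn w (Icc a b)) : ContinuousOn (fun x => ∫ t in a..x, w t) (Icc a b) := by
  have := intervalIntegral.continuousOn_primitive_interval (μ := volume) (a := a) (b := b)
    (f := w) (by rw [uIcc_of_le hab]; exact hw.integrableOn_Icc)
  rwa [uIcc_of_le hab] at this

lemma integral_succ_mul_primitive_pow_mul {w : ℝ → ℝ} {a b : ℝ} (hab : a ≤ b)
    (hw : ContinuousOn w (Icc a b)) (n : ℕ) :
    ∫ x in a..b, ((n : ℝ) + 1) * (∫ t in a..x, w t) ^ n * w x = (∫ x in a..b, w x) ^ (n + 1) := by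
  have hG := continuousOn_primitive_Icc hab hw
  have hint : ContinuousOn (fun x => ((n : ℝ) + 1) * (∫ t in a..x, w t) ^ n * w x) (Icc a b) :=
    (continuousOn_const.mul (hG.pow n)).mul hw
  rw [intervalIntegral.integral_eq_sub_of_hasDeriv_right_of_le hab (hG.pow (n + 1)) (fun x hx => ?_)
    (hint.intervalIntegrable_of_Icc hab)]
  · simp
  have hxI : x ∈ Icc a b := Ioo_subset_Icc_self hx
  have hderiv : HasDerivAt (fun y => ∫ t in a..y, w t) (w x) x :=
    intervalIntegral.integral_hasDerivAt_right
      ((hw.mono (Icc_subset_Icc_right hxI.2)).intervalIntegrable_of_Icc hxI.1)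
      ((hw.mono Ioo_subset_Icc_self).stronglyMeasurableAtFilter isOpen_Ioo x hx)
      ((hw x hxI).continuousAt (Icc_mem_nhds hx.1 hx.2))
  simpa using (hderiv.pow (n + 1)).hasDerivWithinAt

lemma add_primitive_pow_le_integral {w R : ℝ → ℝ} {a b C : ℝ} (n : ℕ) (hab : a ≤ b)
    (hw : ContinuousOn w (Icc a b)) (hR : IntervalIntegrable R volume a b)
    (hle : ∀ x ∈ Icc a b, ((n : ℝ) + 1) * (∫ t in a..x, w t) ^ n * w x + C ≤ R x) :
    (b - a) * C + (∫ x in a..b, w x) ^ (n + 1) ≤ ∫ x in a..b, R x := by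
  have hint : IntervalIntegrable (fun x => ((n : ℝ) + 1) * (∫ t in a..x, w t) ^ n * w x)
      volume a b :=
    ((continuousOn_const.mul ((continuousOn_primitive_Icc hab hw).pow n)).mul hw
      ).intervalIntegrable_of_Icc hab
  have := intervalIntegral.integral_mono_on hab (hint.add intervalIntegrable_const) hR hle
  rwa [intervalIntegral.integral_add hint intervalIntegrable_const,
    integral_succ_mul_primitive_pow_mul hab hw, intervalIntegral.integral_const, smul_eq_mul,
    add_comm] at this

lemma succ_mul_pow_mul_div_add_le {n : ℕ} (hn : 1 ≤ n) {c d H u F γ Γ : ℝ} (hc : 0 < c)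
    (hd : 0 < d) (hH : 0 ≤ H) (hu : 1 ≤ u) (hF : c * u ≤ F) (hγ : 0 ≤ γ) (hΓ : 0 ≤ Γ)
    (hΓle : Γ ≤ γ * (log u / d))
    (hK : (n ! : ℝ) / ((n : ℝ) + 1) ^ (n - 1) ≤ c ^ (n + 1) * d ^ n * H) :
    ((n : ℝ) + 1) * Γ ^ n * (γ / F) + c ^ (n + 1) * γ ^ (n + 1) * H / F ≤
      F ^ n * γ ^ (n + 1) * H := by
  have hF0 : 0 < F := (mul_pos hc (one_pos.trans_le hu)).trans_le hF
  have hu1 : 0 ≤ u ^ (n + 1) - 1 := sub_nonneg.2 (one_le_pow₀ hu)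
  have hlog : 0 ≤ log u := log_nonneg hu
  have hpow : ((n : ℝ) + 1) * Γ ^ n ≤ γ ^ n * (c ^ (n + 1) * H * (u ^ (n + 1) - 1)) :=
    calc ((n : ℝ) + 1) * Γ ^ n ≤ ((n : ℝ) + 1) * (γ * (log u / d)) ^ n := by gcongr
      _ = γ ^ n * (((n : ℝ) + 1) * log u ^ n) / d ^ n := by rw [mul_pow, div_pow]; ring
      _ ≤ γ ^ n * (n ! / ((n : ℝ) + 1) ^ (n - 1) * (u ^ (n + 1) - 1)) / d ^ n := by
        gcongr γ ^ n * ?_ / _; exact succ_mul_log_pow_le hn hu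
      _ ≤ γ ^ n * (c ^ (n + 1) * d ^ n * H * (u ^ (n + 1) - 1)) / d ^ n := by gcongr
      _ = γ ^ n * (c ^ (n + 1) * H * (u ^ (n + 1) - 1)) := by field_simp
  calc ((n : ℝ) + 1) * Γ ^ n * (γ / F) + c ^ (n + 1) * γ ^ (n + 1) * H / F
      = γ / F * (((n : ℝ) + 1) * Γ ^ n) + γ ^ (n + 1) * H * c ^ (n + 1) / F := by ring
    _ ≤ γ / F * (γ ^ n * (c ^ (n + 1) * H * (u ^ (n + 1) - 1))) +
        γ ^ (n + 1) * H * c ^ (n + 1) / F := by gcongr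
    _ = γ ^ (n + 1) * H * (c * u) ^ (n + 1) / F := by ring
    _ ≤ γ ^ (n + 1) * H * F ^ (n + 1) / F := by gcongr
    _ = F ^ n * γ ^ (n + 1) * H := by field_simp; ring

lemma succ_mul_primitive_pow_mul_add_le {f g h : ℝ → ℝ} {a b d x : ℝ} {n : ℕ} (hn : 1 ≤ n)
    (hx : x ∈ Icc a b) (hfa : 0 < f a) (hd : 0 < d)
    (htan : ∀ t ∈ Icc a b, f a + d * (t - a) ≤ f t) (hf_cont : ContinuousOn f (Icc a b))
    (hf_mono : MonotoneOn f (Icc a b)) (hg_cont : ContinuousOn g (Icc a b))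
    (hg_mono : MonotoneOn g (Icc a b)) (hga : 0 ≤ g a) (hh_mono : MonotoneOn h (Icc a b))
    (hha : 0 ≤ h a) (hK : (n ! : ℝ) / ((n : ℝ) + 1) ^ (n - 1) ≤ f a ^ (n + 1) * d ^ n * h a) :
    ((n : ℝ) + 1) * (∫ t in a..x, g t / f t) ^ n * (g x / f x) +
      f a ^ (n + 1) * g a ^ (n + 1) * h a / f b ≤ f x ^ n * g x ^ (n + 1) * h x := by
  have ha : a ∈ Icc a b := left_mem_Icc.2 (hx.1.trans hx.2)
  have hax : Icc a x ⊆ Icc a b := Icc_subset_Icc_right hx.2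
  have hg0 : ∀ t ∈ Icc a b, 0 ≤ g t := fun t ht => hga.trans (hg_mono ha ht ht.1)
  have hf0 : ∀ t ∈ Icc a b, 0 < f t := fun t ht => hfa.trans_le (hf_mono ha ht ht.1)
  have hu : f a * ((f a + d * (x - a)) / f a) ≤ f x := by
    rw [mul_div_cancel₀ _ hfa.ne']; exact htan x hx
  have hpt := succ_mul_pow_mul_div_add_le hn hfa hd hha
    ((one_le_div hfa).2 (by nlinarith [hx.1])) hu (hg0 x hx)
    (intervalIntegral.integral_nonneg hx.1 fun t ht =>
      div_nonneg (hg0 t (hax ht)) (hf0 t (hax ht)).le)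
    (integral_div_le_mul_log hfa hd hx.1 (hf_cont.mono hax) (fun t ht => htan t (hax ht))
      (hg_cont.mono hax) (hg_mono.mono hax) (hg0 x hx)) hK
  have hfx := hf0 x hx
  have hgx := hg0 x hx
  calc _ ≤ ((n : ℝ) + 1) * (∫ t in a..x, g t / f t) ^ n * (g x / f x) +
        f a ^ (n + 1) * g x ^ (n + 1) * h a / f x := by
        gcongr _ + f a ^ (n + 1) * ?_ ^ (n + 1) * h a / ?_
        · exact hg_mono ha hx hx.1
        · exact hf_mono hx (right_mem_Icc.2 (hx.1.trans hx.2)) hx.2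
    _ ≤ f x ^ n * g x ^ (n + 1) * h a := hpt
    _ ≤ f x ^ n * g x ^ (n + 1) * h x := by gcongr; exact hh_mono ha hx hx.1

theorem stmt6_general (a b : ℝ) (hab : a < b)
    (f : ℝ → ℝ)
    (hf_diff : DifferentiableOn ℝ f (Set.Icc a b))
    (hf_diff2 : DifferentiableOn ℝ (derivWithin f (Set.Icc a b)) (Set.Icc a b))
    (hf'_nonneg : ∀ x ∈ Set.Icc a b, 0 ≤ derivWithin f (Set.Icc a b) x)
    (hf''_nonneg : ∀ x ∈ Set.Icc a b,
      0 ≤ derivWithin (derivWithin f (Set.Icc a b)) (Set.Icc a b) x)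
    (hf_pos : ∀ t ∈ Set.Icc a b, 0 < f t)
    (g : ℝ → ℝ) (hg_mono : MonotoneOn g (Set.Icc a b))
    (hg_cont : ContinuousOn g (Set.Icc a b))
    (hg_nonneg : ∀ x ∈ Set.Icc a b, 0 ≤ g x)
    (h : ℝ → ℝ)
    (hh_mono : MonotoneOn h (Set.Icc a b))
    (hh_nonneg : ∀ x ∈ Set.Icc a b, 0 ≤ h x)
    (n : ℕ) (hn : 1 ≤ n)
    (hcond : (n.factorial : ℝ) / ((n : ℝ) + 1) ^ (n - 1) ≤
      f a ^ (n + 1) * derivWithin f (Set.Icc a b) a ^ n * h a) :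
    (b - a) * f a ^ (n + 1) * g a ^ (n + 1) * h a / f b +
      (∫ x in a..b, g x / f x) ^ (n + 1) ≤
    ∫ x in a..b, f x ^ n * g x ^ (n + 1) * h x := by
  have ha : a ∈ Icc a b := left_mem_Icc.2 hab.le
  have hd : 0 < derivWithin f (Icc a b) a := by
    by_contra! hd
    rw [le_antisymm hd (hf'_nonneg a ha), zero_pow (by omega), mul_zero, zero_mul] at hcond
    exact hcond.not_gt (by positivity)
  have htan : ∀ t ∈ Icc a b, f a + derivWithin f (Icc a b) a * (t - a) ≤ f t := fun t ht =>
    add_derivWithin_mul_sub_le hf_diff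
      (monotoneOn_Icc_of_derivWithin_nonneg hf_diff2 hf''_nonneg) ht
  have hR : IntervalIntegrable (fun x => f x ^ n * g x ^ (n + 1) * h x) volume a b :=
    (hh_mono.mono (uIcc_of_le hab.le).subset).intervalIntegrable.continuousOn_mul
      (by rw [uIcc_of_le hab.le]; exact (hf_diff.continuousOn.pow n).mul (hg_cont.pow (n + 1)))
  have key := add_primitive_pow_le_integral (w := fun x => g x / f x) n hab.le
    (hg_cont.div hf_diff.continuousOn fun t ht => (hf_pos t ht).ne') hR fun x hx =>
      succ_mul_primitive_pow_mul_add_le hn hx (hf_pos a ha) hd htan hf_diff.continuousOn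
        (monotoneOn_Icc_of_derivWithin_nonneg hf_diff hf'_nonneg) hg_cont hg_mono (hg_nonneg a ha)
        hh_mono (hh_nonneg a ha) hcond
  convert key using 2
  ring

theorem stmt6 (a b : ℝ) (hab : a < b)
    (f : ℝ → ℝ)
    (hf_diff : DifferentiableOn ℝ f (Set.Icc a b))
    (hf_diff2 : DifferentiableOn ℝ (derivWithin f (Set.Icc a b)) (Set.Icc a b))
    (hf'_nonneg : ∀ x ∈ Set.Icc a b, 0 ≤ derivWithin f (Set.Icc a b) x)
    (hf''_nonneg : ∀ x ∈ Set.Icc a b,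
      0 ≤ derivWithin (derivWithin f (Set.Icc a b)) (Set.Icc a b) x)
    (hf_pos : ∀ t ∈ Set.Icc a b, 0 < f t)
    (g : ℝ → ℝ) (hg_mono : MonotoneOn g (Set.Icc a b))
    (hg_cont : ContinuousOn g (Set.Icc a b))
    (hg_nonneg : ∀ x ∈ Set.Icc a b, 0 ≤ g x)
    (h : ℝ → ℝ) (hD : DPlus a b h ∨ DMinus a b h)
    (hh_mono : MonotoneOn h (Set.Icc a b))
    (hh_nonneg : ∀ x ∈ Set.Icc a b, 0 ≤ h x)
    (n : ℕ) (hn : 1 ≤ n)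
    (hcond : (n.factorial : ℝ) / ((n : ℝ) + 1) ^ (n - 1) ≤
      f a ^ (n + 1) * derivWithin f (Set.Icc a b) a ^ n * h a) :
    (b - a) * f a ^ (n + 1) * g a ^ (n + 1) * h a / f b +
      (∫ x in a..b, g x / f x) ^ (n + 1) ≤
    ∫ x in a..b, f x ^ n * g x ^ (n + 1) * h x :=
  stmt6_general a b hab f hf_diff hf_diff2 hf'_nonneg hf''_nonneg hf_pos g hg_mono hg_cont hg_nonneg
    h hh_mono hh_nonneg n hn hcond
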